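/- Let S be a finite singleton-rich semigroup and s, t ∈ S such that sᵢ* tᵢ⁺ = tᵢ⁺ sᵢ* for every i ≥ 0 in the ε-sequence (s₀ = s, t₀ = t, s_{i+1} = sᵢ tᵢ⁺, t_{i+1} = sᵢ* tᵢ). Then φ^{(s,t)} = ψ^{(s,t)}, and s_{2i} = s^φ_i and t_{2i} = t^ψ_i for all i ≥ 0. In particular, if S ∈ ECom (idempotents commute), this holds for all pairs (s,t). -/

import Mathlib

open scoped Classical

/-- φ*(s): the idempotent right identities of `s`. -/
def rIds {S : Type*} [Mul S] (s : S) : Set S := {e | e * e = e ∧ s * e = s}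

/-- φ⁺(s): the idempotent left identities of `s`. -/
def lIds {S : Type*} [Mul S] (s : S) : Set S := {e | e * e = e ∧ e * s = s}

/-- `x` is the (necessarily unique) element of a singleton kernel (minimal ideal) of the
subsemigroup `T`: `{x}` is an ideal of `T`, hence the minimal ideal of `T`. -/
def IsKer {S : Type*} [Semigroup S] (T : Subsemigroup S) (x : S) : Prop :=
  x ∈ T ∧ ∀ a ∈ T, a * x = x ∧ x * a = x

/-- The natural partial order on idempotents: `e ≤ f` iff `ef = fe = e`. -/
def nle {S : Type*} [Mul S] (e f : S) : Prop := e * f = e ∧ f * e = e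

/-- The relation `≪`: `s ≪ t` iff `s = s⁺ t s*`, where `sa s = s*` and `pl s = s⁺`. -/
def ll {S : Type*} [Mul S] (sa pl : S → S) (s t : S) : Prop := s = pl s * t * sa s

/-- φ(x,y) = (x* y)⁺. -/
def phiF {S : Type*} [Mul S] (sa pl : S → S) (x y : S) : S := pl (sa x * y)

/-- ψ(x,y) = (x y⁺)*. -/
def psiF {S : Type*} [Mul S] (sa pl : S → S) (x y : S) : S := sa (x * pl y)

/-- The φ-sequence: `(s^φ₀, t^φ₀) = (s, t)`,
`s^φ_{i+1} = s^φ_i φ(s^φ_i, t^φ_i)`, `t^φ_{i+1} = (s^φ_i)* t^φ_i`. -/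
def phiSeq {S : Type*} [Mul S] (sa pl : S → S) (s t : S) : ℕ → S × S
  | 0 => (s, t)
  | i + 1 =>
      let p := phiSeq sa pl s t i
      (p.1 * phiF sa pl p.1 p.2, sa p.1 * p.2)

/-- The ψ-sequence: `(s^ψ₀, t^ψ₀) = (s, t)`,
`s^ψ_{i+1} = s^ψ_i (t^ψ_i)⁺`, `t^ψ_{i+1} = ψ(s^ψ_i, t^ψ_i) t^ψ_i`. -/
def psiSeq {S : Type*} [Mul S] (sa pl : S → S) (s t : S) : ℕ → S × S
  | 0 => (s, t)
  | i + 1 =>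
      let p := psiSeq sa pl s t i
      (p.1 * pl p.2, psiF sa pl p.1 p.2 * p.2)

/-- `e` is the stable (eventual) value `φ^{(s,t)}` of the sequence `φ(s^φ_i, t^φ_i)`. -/
def IsPhiLim {S : Type*} [Mul S] (sa pl : S → S) (s t e : S) : Prop :=
  ∃ N : ℕ, ∀ i ≥ N, phiF sa pl (phiSeq sa pl s t i).1 (phiSeq sa pl s t i).2 = e

/-- `e` is the stable (eventual) value `ψ^{(s,t)}` of the sequence `ψ(s^ψ_i, t^ψ_i)`. -/
def IsPsiLim {S : Type*} [Mul S] (sa pl : S → S) (s t e : S) : Prop :=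
  ∃ N : ℕ, ∀ i ≥ N, psiF sa pl (psiSeq sa pl s t i).1 (psiSeq sa pl s t i).2 = e

/-!
Write `eᵢ = tᵢ⁺` and `fᵢ = sᵢ*`. Because `fᵢ` and `eᵢ` commute, `eᵢ` is an idempotent left
identity of `tᵢ₊₁` and `fᵢ` an idempotent right identity of `sᵢ₊₁`; as `(·)⁺` and `(·)*` pick the
zero of the semigroup generated by such identities, this gives `eᵢ₊₁ ≤ eᵢ`, `fᵢ₊₁ ≤ fᵢ`,
`eᵢ₊₁ ≤ fᵢ` and `fᵢ₊₁ ≤ eᵢ` in the natural order. The first two turn two ε-steps into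
`sᵢ₊₂ = sᵢ eᵢ₊₁` and `tᵢ₊₂ = fᵢ₊₁ tᵢ`, which are one φ-step and one ψ-step; hence
`φ(s^φ_i, t^φ_i) = e₂ᵢ₊₁` and `ψ(s^ψ_i, t^ψ_i) = f₂ᵢ₊₁`. Once both are constant, the
interleaving `f₂ᵢ₊₃ ≤ e₂ᵢ₊₂ ≤ f₂ᵢ₊₁` and `e₂ᵢ₊₃ ≤ e₂ᵢ₊₂ ≤ e₂ᵢ₊₁` squeezes `e₂ᵢ₊₂` onto both limits.
-/

theorem nle_antisymm {S : Type*} [Mul S] {e f : S} (hef : nle e f) (hfe : nle f e) : e = f :=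
  hef.2.symm.trans hfe.1

theorem IsKer.nle {S : Type*} [Semigroup S] {T : Subsemigroup S} {x a : S} (hx : IsKer T x)
    (ha : a ∈ T) : nle x a :=
  ⟨(hx.2 a ha).2, (hx.2 a ha).1⟩

theorem IsKer.mul_self {S : Type*} [Semigroup S] {T : Subsemigroup S} {x : S} (hx : IsKer T x) :
    x * x = x :=
  (hx.2 x hx.1).1

theorem mul_eq_self_of_mem_closure_rIds {S : Type*} [Semigroup S] {s a : S}
    (ha : a ∈ Subsemigroup.closure (rIds s)) : s * a = s := by
  induction ha using Subsemigroup.closure_induction with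
  | mem x hx => exact hx.2
  | mul x y _ _ ihx ihy => rw [← mul_assoc, ihx, ihy]

theorem mul_eq_self_of_mem_closure_lIds {S : Type*} [Semigroup S] {s a : S}
    (ha : a ∈ Subsemigroup.closure (lIds s)) : a * s = s := by
  induction ha using Subsemigroup.closure_induction with
  | mem x hx => exact hx.2
  | mul x y _ _ ihx ihy => rw [mul_assoc, ihy, ihx]

def IsEpsSeq {S : Type*} [Mul S] (sa pl : S → S) (sq tq : ℕ → S) : Prop :=
  ∀ i : ℕ, sq (i + 1) = sq i * pl (tq i) ∧ tq (i + 1) = sa (sq i) * tq i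

section EpsilonSequence

variable {S : Type*} [Semigroup S] {sa pl : S → S} {sq tq : ℕ → S}

theorem IsEpsSeq.pl_mem_lIds_succ (h : IsEpsSeq sa pl sq tq)
    (hpl : ∀ s : S, IsKer (Subsemigroup.closure (lIds s)) (pl s))
    (hcomm : ∀ i : ℕ, sa (sq i) * pl (tq i) = pl (tq i) * sa (sq i)) (i : ℕ) :
    pl (tq i) ∈ lIds (tq (i + 1)) := by
  refine ⟨(hpl _).mul_self, ?_⟩
  rw [(h i).2, ← mul_assoc, ← hcomm i, mul_assoc, mul_eq_self_of_mem_closure_lIds (hpl _).1]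

theorem IsEpsSeq.sa_mem_rIds_succ (h : IsEpsSeq sa pl sq tq)
    (hsa : ∀ s : S, IsKer (Subsemigroup.closure (rIds s)) (sa s))
    (hcomm : ∀ i : ℕ, sa (sq i) * pl (tq i) = pl (tq i) * sa (sq i)) (i : ℕ) :
    sa (sq i) ∈ rIds (sq (i + 1)) := by
  refine ⟨(hsa _).mul_self, ?_⟩
  rw [(h i).1, mul_assoc, ← hcomm i, ← mul_assoc, mul_eq_self_of_mem_closure_rIds (hsa _).1]

theorem IsEpsSeq.pl_mem_rIds_succ (h : IsEpsSeq sa pl sq tq)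
    (hpl : ∀ s : S, IsKer (Subsemigroup.closure (lIds s)) (pl s)) (i : ℕ) :
    pl (tq i) ∈ rIds (sq (i + 1)) :=
  ⟨(hpl _).mul_self, by rw [(h i).1, mul_assoc, (hpl _).mul_self]⟩

theorem IsEpsSeq.sa_mem_lIds_succ (h : IsEpsSeq sa pl sq tq)
    (hsa : ∀ s : S, IsKer (Subsemigroup.closure (rIds s)) (sa s)) (i : ℕ) :
    sa (sq i) ∈ lIds (tq (i + 1)) :=
  ⟨(hsa _).mul_self, by rw [(h i).2, ← mul_assoc, (hsa _).mul_self]⟩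

theorem IsEpsSeq.nle_pl_succ (h : IsEpsSeq sa pl sq tq)
    (hpl : ∀ s : S, IsKer (Subsemigroup.closure (lIds s)) (pl s))
    (hcomm : ∀ i : ℕ, sa (sq i) * pl (tq i) = pl (tq i) * sa (sq i)) (i : ℕ) :
    nle (pl (tq (i + 1))) (pl (tq i)) :=
  (hpl _).nle (Subsemigroup.subset_closure (h.pl_mem_lIds_succ hpl hcomm i))

theorem IsEpsSeq.nle_sa_succ (h : IsEpsSeq sa pl sq tq)
    (hsa : ∀ s : S, IsKer (Subsemigroup.closure (rIds s)) (sa s))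
    (hcomm : ∀ i : ℕ, sa (sq i) * pl (tq i) = pl (tq i) * sa (sq i)) (i : ℕ) :
    nle (sa (sq (i + 1))) (sa (sq i)) :=
  (hsa _).nle (Subsemigroup.subset_closure (h.sa_mem_rIds_succ hsa hcomm i))

theorem IsEpsSeq.nle_pl_succ_sa (h : IsEpsSeq sa pl sq tq)
    (hsa : ∀ s : S, IsKer (Subsemigroup.closure (rIds s)) (sa s))
    (hpl : ∀ s : S, IsKer (Subsemigroup.closure (lIds s)) (pl s)) (i : ℕ) :
    nle (pl (tq (i + 1))) (sa (sq i)) :=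
  (hpl _).nle (Subsemigroup.subset_closure (h.sa_mem_lIds_succ hsa i))

theorem IsEpsSeq.nle_sa_succ_pl (h : IsEpsSeq sa pl sq tq)
    (hsa : ∀ s : S, IsKer (Subsemigroup.closure (rIds s)) (sa s))
    (hpl : ∀ s : S, IsKer (Subsemigroup.closure (lIds s)) (pl s)) (i : ℕ) :
    nle (sa (sq (i + 1))) (pl (tq i)) :=
  (hsa _).nle (Subsemigroup.subset_closure (h.pl_mem_rIds_succ hpl i))

theorem IsEpsSeq.sq_add_two (h : IsEpsSeq sa pl sq tq)
    (hpl : ∀ s : S, IsKer (Subsemigroup.closure (lIds s)) (pl s))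
    (hcomm : ∀ i : ℕ, sa (sq i) * pl (tq i) = pl (tq i) * sa (sq i)) (i : ℕ) :
    sq (i + 2) = sq i * pl (tq (i + 1)) := by
  rw [(h (i + 1)).1, (h i).1, mul_assoc, (h.nle_pl_succ hpl hcomm i).2]

theorem IsEpsSeq.tq_add_two (h : IsEpsSeq sa pl sq tq)
    (hsa : ∀ s : S, IsKer (Subsemigroup.closure (rIds s)) (sa s))
    (hcomm : ∀ i : ℕ, sa (sq i) * pl (tq i) = pl (tq i) * sa (sq i)) (i : ℕ) :
    tq (i + 2) = sa (sq (i + 1)) * tq i := by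
  rw [(h (i + 1)).2, (h i).2, ← mul_assoc, (h.nle_sa_succ hsa hcomm i).1]

theorem IsEpsSeq.phiSeq_eq (h : IsEpsSeq sa pl sq tq)
    (hsa : ∀ s : S, IsKer (Subsemigroup.closure (rIds s)) (sa s))
    (hpl : ∀ s : S, IsKer (Subsemigroup.closure (lIds s)) (pl s))
    (hcomm : ∀ i : ℕ, sa (sq i) * pl (tq i) = pl (tq i) * sa (sq i)) (i : ℕ) :
    (phiSeq sa pl (sq 0) (tq 0) i).1 = sq (2 * i) ∧
      sa (sq (2 * i)) * (phiSeq sa pl (sq 0) (tq 0) i).2 = tq (2 * i + 1) := by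
  induction i with
  | zero => exact ⟨rfl, ((h 0).2).symm⟩
  | succ i ih =>
    obtain ⟨hs, ht⟩ := ih
    have hs' : (phiSeq sa pl (sq 0) (tq 0) (i + 1)).1 = sq (2 * i) * pl (tq (2 * i + 1)) := by
      simp only [phiSeq, phiF, hs, ht]
    have ht' : (phiSeq sa pl (sq 0) (tq 0) (i + 1)).2 = tq (2 * i + 1) := by
      simp only [phiSeq, hs, ht]
    rw [hs', ht']
    exact ⟨(h.sq_add_two hpl hcomm (2 * i)).symm, (h.tq_add_two hsa hcomm (2 * i + 1)).symm⟩

theorem IsEpsSeq.psiSeq_eq (h : IsEpsSeq sa pl sq tq)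
    (hsa : ∀ s : S, IsKer (Subsemigroup.closure (rIds s)) (sa s))
    (hpl : ∀ s : S, IsKer (Subsemigroup.closure (lIds s)) (pl s))
    (hcomm : ∀ i : ℕ, sa (sq i) * pl (tq i) = pl (tq i) * sa (sq i)) (i : ℕ) :
    (psiSeq sa pl (sq 0) (tq 0) i).2 = tq (2 * i) ∧
      (psiSeq sa pl (sq 0) (tq 0) i).1 * pl (tq (2 * i)) = sq (2 * i + 1) := by
  induction i with
  | zero => exact ⟨rfl, ((h 0).1).symm⟩
  | succ i ih =>
    obtain ⟨ht, hs⟩ := ih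
    have hs' : (psiSeq sa pl (sq 0) (tq 0) (i + 1)).1 = sq (2 * i + 1) := by
      simp only [psiSeq, ht, hs]
    have ht' : (psiSeq sa pl (sq 0) (tq 0) (i + 1)).2 = sa (sq (2 * i + 1)) * tq (2 * i) := by
      simp only [psiSeq, psiF, ht, hs]
    rw [hs', ht']
    exact ⟨(h.tq_add_two hsa hcomm (2 * i)).symm, (h.sq_add_two hpl hcomm (2 * i + 1)).symm⟩

theorem IsEpsSeq.phiF_phiSeq (h : IsEpsSeq sa pl sq tq)
    (hsa : ∀ s : S, IsKer (Subsemigroup.closure (rIds s)) (sa s))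
    (hpl : ∀ s : S, IsKer (Subsemigroup.closure (lIds s)) (pl s))
    (hcomm : ∀ i : ℕ, sa (sq i) * pl (tq i) = pl (tq i) * sa (sq i)) (i : ℕ) :
    phiF sa pl (phiSeq sa pl (sq 0) (tq 0) i).1 (phiSeq sa pl (sq 0) (tq 0) i).2 =
      pl (tq (2 * i + 1)) := by
  rw [phiF, (h.phiSeq_eq hsa hpl hcomm i).1, (h.phiSeq_eq hsa hpl hcomm i).2]

theorem IsEpsSeq.psiF_psiSeq (h : IsEpsSeq sa pl sq tq)
    (hsa : ∀ s : S, IsKer (Subsemigroup.closure (rIds s)) (sa s))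
    (hpl : ∀ s : S, IsKer (Subsemigroup.closure (lIds s)) (pl s))
    (hcomm : ∀ i : ℕ, sa (sq i) * pl (tq i) = pl (tq i) * sa (sq i)) (i : ℕ) :
    psiF sa pl (psiSeq sa pl (sq 0) (tq 0) i).1 (psiSeq sa pl (sq 0) (tq 0) i).2 =
      sa (sq (2 * i + 1)) := by
  rw [psiF, (h.psiSeq_eq hsa hpl hcomm i).1, (h.psiSeq_eq hsa hpl hcomm i).2]

theorem IsEpsSeq.pl_eq_sa_of_periodic (h : IsEpsSeq sa pl sq tq)
    (hsa : ∀ s : S, IsKer (Subsemigroup.closure (rIds s)) (sa s))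
    (hpl : ∀ s : S, IsKer (Subsemigroup.closure (lIds s)) (pl s))
    (hcomm : ∀ i : ℕ, sa (sq i) * pl (tq i) = pl (tq i) * sa (sq i)) {m : ℕ}
    (he : pl (tq (m + 2)) = pl (tq m)) (hf : sa (sq (m + 2)) = sa (sq m)) :
    pl (tq m) = sa (sq m) := by
  have h_sa : pl (tq (m + 1)) = sa (sq m) :=
    nle_antisymm (h.nle_pl_succ_sa hsa hpl m) (hf ▸ h.nle_sa_succ_pl hsa hpl (m + 1))
  have h_pl : pl (tq (m + 1)) = pl (tq m) :=
    nle_antisymm (h.nle_pl_succ hpl hcomm m) (he ▸ h.nle_pl_succ hpl hcomm (m + 1))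
  exact h_pl.symm.trans h_sa

end EpsilonSequence

theorem stmt15_general {S : Type*} [Semigroup S] (sa pl : S → S)
    (hsa : ∀ s : S, IsKer (Subsemigroup.closure (rIds s)) (sa s))
    (hpl : ∀ s : S, IsKer (Subsemigroup.closure (lIds s)) (pl s))
    (s t : S) (sq tq : ℕ → S) (hs0 : sq 0 = s) (ht0 : tq 0 = t)
    (hcomm : ∀ i : ℕ, sa (sq i) * pl (tq i) = pl (tq i) * sa (sq i))
    (hrec : ∀ i : ℕ, sq (i + 1) = sq i * pl (tq i) ∧ tq (i + 1) = sa (sq i) * tq i)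
    (phiL psiL : S)
    (hphi : IsPhiLim sa pl s t phiL) (hpsi : IsPsiLim sa pl s t psiL) :
    phiL = psiL ∧
      ∀ i : ℕ, sq (2 * i) = (phiSeq sa pl s t i).1 ∧ tq (2 * i) = (psiSeq sa pl s t i).2 := by
  subst hs0 ht0
  have h : IsEpsSeq sa pl sq tq := hrec
  refine ⟨?_, fun i => ⟨(h.phiSeq_eq hsa hpl hcomm i).1.symm, (h.psiSeq_eq hsa hpl hcomm i).1.symm⟩⟩
  obtain ⟨N, hN⟩ := hphi
  obtain ⟨M, hM⟩ := hpsi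
  simp only [h.phiF_phiSeq hsa hpl hcomm] at hN
  simp only [h.psiF_psiSeq hsa hpl hcomm] at hM
  have hodd : 2 * (N + M + 1) + 1 = 2 * (N + M) + 1 + 2 := by ring
  rw [← hN (N + M) (by omega), ← hM (N + M) (by omega)]
  refine h.pl_eq_sa_of_periodic hsa hpl hcomm ?_ ?_
  · rw [← hodd, hN _ (by omega), hN _ (by omega)]
  · rw [← hodd, hM _ (by omega), hM _ (by omega)]

/-- If `sᵢ* tᵢ⁺ = tᵢ⁺ sᵢ*` for all `i ≥ 0` in the ε-sequence, then `φ^{(s,t)} = ψ^{(s,t)}`,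
and `s_{2i} = s^φ_i`, `t_{2i} = t^ψ_i` for all `i`. (In particular this applies to all pairs
when idempotents of `S` commute.) -/
theorem stmt15 {S : Type*} [Semigroup S] [Fintype S] (sa pl : S → S)
    (hsa : ∀ s : S, IsKer (Subsemigroup.closure (rIds s)) (sa s))
    (hpl : ∀ s : S, IsKer (Subsemigroup.closure (lIds s)) (pl s))
    (s t : S) (sq tq : ℕ → S) (hs0 : sq 0 = s) (ht0 : tq 0 = t)
    (hcomm : ∀ i : ℕ, sa (sq i) * pl (tq i) = pl (tq i) * sa (sq i))
    (hrec : ∀ i : ℕ, sq (i + 1) = sq i * pl (tq i) ∧ tq (i + 1) = sa (sq i) * tq i)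
    (phiL psiL : S)
    (hphi : IsPhiLim sa pl s t phiL) (hpsi : IsPsiLim sa pl s t psiL) :
    phiL = psiL ∧
      ∀ i : ℕ, sq (2 * i) = (phiSeq sa pl s t i).1 ∧ tq (2 * i) = (psiSeq sa pl s t i).2 :=
  stmt15_general sa pl hsa hpl s t sq tq hs0 ht0 hcomm hrec phiL psiL hphi hpsi
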